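/- arXiv:2403.09643 — 5 statements merged into one kernel-verified Lean document; each statement's English description precedes it below -/
import Mathlib

section
/- Let $f : \mathbb{R} \to \mathbb{R}$ be smooth and let $n, a \in \mathbb{N}$ with $a \le n$. Then for all $x \in \mathbb{R}$, $\frac{d^a}{dx^a}\big[{}_0F_1(n+1; x)\, f(x)\big] = \sum_{m=0}^{n} \binom{n}{m} (a)_m\, \frac{(n-m)!}{(n-m+a)!}\, f^{(m)}(x)\, {}_0F_1(n-m+1+a; x)$, where summands with $m > a$ vanish because $(a)_m = 0$. -/
/-- The falling factorial `(a)_m = a (a-1) ⋯ (a-m+1)`. -/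
noncomputable def fallingFactorial (a : ℝ) (m : ℕ) : ℝ :=
  ∏ i ∈ Finset.range m, (a - i)

/-- The confluent hypergeometric limit function
`₀F₁(n+1; x) = ∑_{k=0}^∞ (n! / (n+k)!) xᵏ / k!`. -/
noncomputable def hyp0F1 (n : ℕ) (x : ℝ) : ℝ :=
  ∑' k : ℕ, (n.factorial : ℝ) / ((n + k).factorial : ℝ) * x ^ k / (k.factorial : ℝ)

open Finset

set_option maxHeartbeats 1000000

lemma coeff_nonneg (n k : ℕ) : (0:ℝ) ≤ (n.factorial : ℝ) / ((n + k).factorial : ℝ) :=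
  div_nonneg (by positivity) (by positivity)

lemma coeff_le_one (n k : ℕ) : (n.factorial : ℝ) / ((n + k).factorial : ℝ) ≤ 1 := by
  rw [div_le_one (by positivity)]
  exact_mod_cast Nat.factorial_le (Nat.le_add_right n k)

lemma summable_hyp (n : ℕ) (x : ℝ) :
    Summable (fun k : ℕ => (n.factorial : ℝ) / ((n + k).factorial : ℝ) * x ^ k / (k.factorial : ℝ)) := by
  apply Summable.of_norm_bounded (g := fun k => |x| ^ k / (k.factorial : ℝ))
    (Real.summable_pow_div_factorial |x|)
  intro k
  rw [Real.norm_eq_abs, abs_div, abs_mul, abs_pow, abs_of_nonneg (coeff_nonneg n k),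
    Nat.abs_cast]
  apply div_le_div_of_nonneg_right ?_ (by positivity)
  · calc (n.factorial : ℝ) / ((n + k).factorial : ℝ) * |x| ^ k ≤ 1 * |x| ^ k := by
          gcongr; exacts [coeff_le_one n k]
       _ = |x| ^ k := one_mul _

lemma hasDerivAt_hyp (n : ℕ) (x : ℝ) :
    HasDerivAt (hyp0F1 n) (((n : ℝ) + 1)⁻¹ * hyp0F1 (n + 1) x) x := by
  set R : ℝ := |x| + 1 with hR
  have hxR : x ∈ Metric.ball (0:ℝ) R := by
    simp [Real.dist_eq, hR]
  set g : ℕ → ℝ → ℝ := fun k z => (n.factorial : ℝ) / ((n + k).factorial : ℝ) * z ^ k / (k.factorial : ℝ) with hg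
  set g' : ℕ → ℝ → ℝ := fun k z => (n.factorial : ℝ) / ((n + k).factorial : ℝ) * ((k : ℝ) * z ^ (k - 1)) / (k.factorial : ℝ) with hg'
  set u : ℕ → ℝ := fun k => (k : ℝ) * R ^ (k - 1) / (k.factorial : ℝ) with hu
  have hRpos : (0:ℝ) < R := by positivity
  have hderiv : ∀ k (z : ℝ), HasDerivAt (g k) (g' k z) z := by
    intro k z
    simpa [hg, hg', mul_div_assoc, mul_comm, mul_left_comm] using
      (((hasDerivAt_pow k z).const_mul ((n.factorial : ℝ) / ((n + k).factorial : ℝ))).div_const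
        (k.factorial : ℝ))
  have hbound : ∀ k (z : ℝ), z ∈ Metric.ball (0:ℝ) R → ‖g' k z‖ ≤ u k := by
    intro k z hz
    have hzR : |z| ≤ R := by
      simp only [Metric.mem_ball, Real.dist_eq, sub_zero] at hz
      exact le_of_lt hz
    simp only [hg', hu, Real.norm_eq_abs, abs_div, abs_mul, abs_pow, Nat.abs_cast,
      abs_of_nonneg (coeff_nonneg n k)]
    apply div_le_div_of_nonneg_right ?_ (by positivity)
    calc (n.factorial : ℝ) / ((n + k).factorial : ℝ) * ((k:ℝ) * |z| ^ (k-1))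
        ≤ 1 * ((k:ℝ) * R ^ (k-1)) := by
          gcongr
          all_goals first | exact coeff_le_one n k | exact abs_nonneg z | positivity
      _ = (k:ℝ) * R ^ (k-1) := one_mul _
  have hu_sum : Summable u := by
    rw [← summable_nat_add_iff 1]
    apply Summable.of_norm_bounded (g := fun k => R ^ k / (k.factorial : ℝ))
      (Real.summable_pow_div_factorial R)
    intro k
    have : u (k + 1) = R ^ k / (k.factorial : ℝ) := by
      simp only [hu, Nat.add_sub_cancel, Nat.factorial_succ, Nat.cast_mul]
      rw [Nat.cast_add, Nat.cast_one]
      field_simp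
    rw [this, Real.norm_eq_abs, abs_of_nonneg (by positivity)]
  have hsum0 : Summable fun k => g k (0:ℝ) := by
    apply summable_of_ne_finset_zero (s := {0})
    intro k hk
    have hk' : k ≠ 0 := by simpa using hk
    simp [hg, zero_pow hk']
  have key := hasDerivAt_tsum_of_isPreconnected hu_sum Metric.isOpen_ball
    ((convex_ball (0:ℝ) R).isPreconnected) (fun k y _ => hderiv k y) hbound (Metric.mem_ball_self hRpos) hsum0 hxR
  have hfun : (fun z => ∑' k, g k z) = hyp0F1 n := rfl
  rw [hfun] at key
  refine key.congr_deriv ?_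
  -- ∑' k, g' k x = (n+1)⁻¹ * hyp0F1 (n+1) x
  have hsum' : Summable fun k => g' k x :=
    Summable.of_norm_bounded hu_sum (fun k => hbound k x hxR)
  rw [Summable.tsum_eq_zero_add hsum']
  have h0 : g' 0 x = 0 := by simp [hg']
  rw [h0, zero_add]
  have hterm : ∀ k : ℕ, g' (k + 1) x =
      ((n : ℝ) + 1)⁻¹ * ((((n+1).factorial : ℝ) / ((n + 1 + k).factorial : ℝ)) * x ^ k / (k.factorial : ℝ)) := by
    intro k
    simp only [hg', Nat.add_sub_cancel, Nat.factorial_succ, Nat.cast_mul]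
    rw [Nat.cast_add, Nat.cast_one]
    have h1 : ((n + (k+1)).factorial : ℝ) = ((n + 1 + k).factorial : ℝ) := by
      norm_num; ring_nf
    rw [h1]
    have hk : ((k:ℝ)+1) ≠ 0 := by positivity
    have hkf : ((k.factorial : ℝ)) ≠ 0 := by positivity
    have hnf : (((n+1+k).factorial : ℝ)) ≠ 0 := by positivity
    have hn1 : ((n:ℝ)+1) ≠ 0 := by positivity
    push_cast
    field_simp
  rw [tsum_congr hterm, tsum_mul_left]
  rfl

lemma deriv_hyp (n : ℕ) : deriv (hyp0F1 n) = fun x => ((n : ℝ) + 1)⁻¹ * hyp0F1 (n + 1) x :=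
  funext fun x => (hasDerivAt_hyp n x).deriv

lemma differentiable_hyp (n : ℕ) : Differentiable ℝ (hyp0F1 n) :=
  fun x => (hasDerivAt_hyp n x).differentiableAt

lemma contDiff_hyp (k : ℕ) : ∀ n : ℕ, ContDiff ℝ (k : WithTop ℕ∞) (hyp0F1 n) := by
  induction k with
  | zero =>
    intro n
    simpa [contDiff_zero] using (differentiable_hyp n).continuous
  | succ k ih =>
    intro n
    have : ((k + 1 : ℕ) : WithTop ℕ∞) = (k : WithTop ℕ∞) + 1 := by push_cast; rfl
    rw [this, contDiff_succ_iff_deriv]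
    refine ⟨differentiable_hyp n, by simp, ?_⟩
    rw [deriv_hyp]
    exact contDiff_const.mul (ih (n + 1))

lemma iter_hyp (k : ℕ) : ∀ (n : ℕ) (x : ℝ), iteratedDeriv k (hyp0F1 n) x =
    (n.factorial : ℝ) / ((n + k).factorial : ℝ) * hyp0F1 (n + k) x := by
  induction k with
  | zero => intro n x; simp [div_self (by positivity : ((n.factorial:ℝ)) ≠ 0)]
  | succ k ih =>
    intro n x
    rw [iteratedDeriv_succ', deriv_hyp]
    rw [← iteratedDerivWithin_univ,
      iteratedDerivWithin_const_mul (Set.mem_univ x) uniqueDiffOn_univ (((n:ℝ)+1)⁻¹)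
        ((contDiff_hyp k (n+1)).contDiffWithinAt),
      iteratedDerivWithin_univ, ih (n+1) x]
    have h1 : n + 1 + k = n + (k + 1) := by ring
    rw [h1]
    have hnf : (((n+(k+1)).factorial : ℝ)) ≠ 0 := by positivity
    have hn1 : ((n:ℝ)+1) ≠ 0 := by positivity
    rw [Nat.factorial_succ]
    push_cast
    field_simp

lemma pascal_sum (F G : ℕ → ℝ) (a : ℕ) :
    ∑ m ∈ range (a + 1), (a.choose m : ℝ) * F (a + 1 - m) * G m
      + ∑ m ∈ range (a + 1), (a.choose m : ℝ) * F (a - m) * G (m + 1)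
    = ∑ m ∈ range (a + 2), ((a+1).choose m : ℝ) * F (a + 1 - m) * G m := by
  rw [show a + 2 = (a + 1) + 1 from rfl,
    Finset.sum_range_succ' (fun m => (((a+1).choose m : ℝ)) * F (a + 1 - m) * G m) (a+1)]
  simp only [Nat.choose_succ_succ, Nat.cast_add, Nat.succ_sub_succ, Nat.choose_zero_right,
    Nat.cast_one, one_mul, Nat.sub_zero, add_mul, Finset.sum_add_distrib]
  rw [Finset.sum_range_succ' (fun m => ((a.choose m : ℝ)) * F (a + 1 - m) * G m) a]
  simp only [Nat.succ_sub_succ, Nat.choose_zero_right, Nat.cast_one, one_mul, Nat.sub_zero]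
  rw [Finset.sum_range_succ (fun i => ((a.choose (i+1) : ℝ)) * F (a - i) * G (i+1)) a]
  rw [Nat.choose_succ_self, Nat.cast_zero, zero_mul, zero_mul, add_zero]
  ring

lemma leibniz_iteratedDeriv (a : ℕ) : ∀ (f g : ℝ → ℝ),
    (∀ k : ℕ, ContDiff ℝ (k : WithTop ℕ∞) f) → (∀ k : ℕ, ContDiff ℝ (k : WithTop ℕ∞) g) →
    ∀ x : ℝ, iteratedDeriv a (fun y => f y * g y) x =
      ∑ m ∈ range (a + 1), (a.choose m : ℝ) * iteratedDeriv (a - m) f x * iteratedDeriv m g x := by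
  induction a with
  | zero => intro f g hf hg x; simp
  | succ a ih =>
    intro f g hf hg x
    have hf1 : Differentiable ℝ f := (hf 1).differentiable (by simp)
    have hg1 : Differentiable ℝ g := (hg 1).differentiable (by simp)
    have hf' : ∀ k : ℕ, ContDiff ℝ (k : WithTop ℕ∞) (deriv f) := by
      intro k
      have h := hf (k+1)
      rw [show ((k+1:ℕ):WithTop ℕ∞) = (k:WithTop ℕ∞)+1 by push_cast; rfl,
        contDiff_succ_iff_deriv] at h
      exact h.2.2
    have hg' : ∀ k : ℕ, ContDiff ℝ (k : WithTop ℕ∞) (deriv g) := by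
      intro k
      have h := hg (k+1)
      rw [show ((k+1:ℕ):WithTop ℕ∞) = (k:WithTop ℕ∞)+1 by push_cast; rfl,
        contDiff_succ_iff_deriv] at h
      exact h.2.2
    have hderiv : deriv (fun y => f y * g y) = fun y => deriv f y * g y + f y * deriv g y :=
      funext fun y => deriv_mul (hf1 y) (hg1 y)
    rw [iteratedDeriv_succ', hderiv]
    have hadd : iteratedDeriv a (fun y => deriv f y * g y + f y * deriv g y) x
        = iteratedDeriv a (fun y => deriv f y * g y) x
          + iteratedDeriv a (fun y => f y * deriv g y) x := by
      rw [← iteratedDerivWithin_univ, ← iteratedDerivWithin_univ, ← iteratedDerivWithin_univ]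
      exact iteratedDerivWithin_add (Set.mem_univ x) uniqueDiffOn_univ
        (((hf' a).mul (hg a)).contDiffWithinAt) (((hf a).mul (hg' a)).contDiffWithinAt)
    rw [hadd, ih _ _ hf' hg, ih _ _ hf hg']
    have e1 : ∀ m ∈ range (a + 1),
        (a.choose m : ℝ) * iteratedDeriv (a - m) (deriv f) x * iteratedDeriv m g x
        = (a.choose m : ℝ) * iteratedDeriv (a + 1 - m) f x * iteratedDeriv m g x := by
      intro m hm
      have hm' : m ≤ a := by simpa [Nat.lt_succ_iff] using hm
      have : a + 1 - m = (a - m) + 1 := by omega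
      rw [this, iteratedDeriv_succ']
    have e2 : ∀ m ∈ range (a + 1),
        (a.choose m : ℝ) * iteratedDeriv (a - m) f x * iteratedDeriv m (deriv g) x
        = (a.choose m : ℝ) * iteratedDeriv (a - m) f x * iteratedDeriv (m + 1) g x := by
      intro m _
      rw [iteratedDeriv_succ']
    rw [Finset.sum_congr rfl e1, Finset.sum_congr rfl e2]
    exact pascal_sum (fun i => iteratedDeriv i f x) (fun i => iteratedDeriv i g x) a

lemma ff_eq (a m : ℕ) (h : m ≤ a) :
    fallingFactorial (a:ℝ) m = (a.descFactorial m : ℝ) := by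
  rw [fallingFactorial, Nat.descFactorial_eq_prod_range, Nat.cast_prod]
  refine Finset.prod_congr rfl fun i hi => ?_
  have : i ≤ a := by
    simp only [Finset.mem_range] at hi; omega
  rw [Nat.cast_sub this]

lemma ff_zero (a m : ℕ) (h : a < m) : fallingFactorial (a:ℝ) m = 0 :=
  Finset.prod_eq_zero (Finset.mem_range.mpr h) (by simp)

/-- Integer-order case of the paper's Theorem 3.2: truncated Leibniz rule for the
product of `₀F₁(n+1; ·)` and a smooth function, with `a ≤ n`. -/
theorem truncated_leibniz_hyp0F1 (f : ℝ → ℝ) (hf : ContDiff ℝ (⊤ : ℕ∞) f) (n a : ℕ)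
    (han : a ≤ n) (x : ℝ) :
    iteratedDeriv a (fun y => hyp0F1 n y * f y) x =
      ∑ m ∈ Finset.range (n + 1),
        (n.choose m : ℝ) * fallingFactorial (a : ℝ) m *
          ((n - m).factorial : ℝ) / ((n - m + a).factorial : ℝ) *
          iteratedDeriv m f x * hyp0F1 (n - m + a) x := by
  have hfk : ∀ k : ℕ, ContDiff ℝ (k : WithTop ℕ∞) f := fun k => hf.of_le (by exact_mod_cast le_top)
  rw [leibniz_iteratedDeriv a (hyp0F1 n) f (fun k => contDiff_hyp k n) hfk x]
  rw [← Finset.sum_subset (Finset.range_subset_range.mpr (by omega : a + 1 ≤ n + 1))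
    (fun m _ hm => by
      have hma : a < m := by simp only [Finset.mem_range, Nat.lt_succ_iff, not_le] at hm ⊢; omega
      rw [ff_zero a m hma]
      ring)]
  refine Finset.sum_congr rfl fun m hm => ?_
  have hma : m ≤ a := by simpa [Nat.lt_succ_iff] using hm
  rw [iter_hyp (a - m) n x]
  have hidx : n + (a - m) = n - m + a := by omega
  rw [hidx, ff_eq a m hma]
  have hkey : (a.choose m) * n.factorial
      = n.choose m * a.descFactorial m * (n - m).factorial := by
    rw [Nat.descFactorial_eq_factorial_mul_choose,
      ← Nat.choose_mul_factorial_mul_factorial (le_trans hma han)]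
    ring
  have hne : (((n - m + a).factorial : ℝ)) ≠ 0 := by positivity
  have hkeyR : (a.choose m : ℝ) * (n.factorial : ℝ)
      = (n.choose m : ℝ) * (a.descFactorial m : ℝ) * ((n - m).factorial : ℝ) := by
    exact_mod_cast hkey
  field_simp
  linear_combination (iteratedDeriv m f x * hyp0F1 (n - m + a) x) * hkeyR
end

section
/- Let $f : \mathbb{R} \to \mathbb{R}$ be smooth, let $n \in \mathbb{N}$, and let $x > 0$. Then $\frac{d^n}{dx^n}\big[f(\ln x)\big] = x^{-n} \sum_{m=0}^{n} S_1(n,m)\, f^{(m)}(\ln x)$. -/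
/-- The signed Stirling numbers of the first kind `S₁(n,m)`: the coefficient of `xᵐ`
in the falling factorial polynomial `x (x-1) ⋯ (x-n+1)`. -/
noncomputable def stirlingFirst (n m : ℕ) : ℝ :=
  (descPochhammer ℝ n).coeff m

lemma stirling_rec (n m : ℕ) :
    stirlingFirst (n+1) (m+1) = stirlingFirst n m - stirlingFirst n (m+1) * n := by
  unfold stirlingFirst
  rw [descPochhammer_succ_right, ← Polynomial.C_eq_natCast, Polynomial.coeff_mul_X_sub_C]

lemma stirling_zero (n : ℕ) :
    stirlingFirst (n+1) 0 = - stirlingFirst n 0 * n := by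
  unfold stirlingFirst
  rw [descPochhammer_succ_right, Polynomial.mul_coeff_zero]
  simp [mul_comm]

lemma stirling_top (n : ℕ) : stirlingFirst n (n+1) = 0 := by
  unfold stirlingFirst
  exact Polynomial.coeff_eq_zero_of_natDegree_lt (by simp)

lemma stirling_sum (n : ℕ) (g : ℕ → ℝ) :
    ∑ m ∈ Finset.range (n + 2), stirlingFirst (n+1) m * g m =
      ∑ m ∈ Finset.range (n + 1), stirlingFirst n m * g (m+1)
        - n * ∑ m ∈ Finset.range (n + 1), stirlingFirst n m * g m := by
  rw [Finset.sum_range_succ' (fun m => stirlingFirst (n+1) m * g m) (n+1)]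
  have h1 : ∀ i, stirlingFirst (n+1) (i+1) * g (i+1)
      = stirlingFirst n i * g (i+1) - n * (stirlingFirst n (i+1) * g (i+1)) := by
    intro i; rw [stirling_rec]; ring
  rw [Finset.sum_congr rfl (fun i _ => h1 i), Finset.sum_sub_distrib, stirling_zero]
  rw [← Finset.mul_sum]
  have h2 : ∑ m ∈ Finset.range (n + 1), stirlingFirst n m * g m
      = (∑ i ∈ Finset.range (n+1), stirlingFirst n (i+1) * g (i+1)) + stirlingFirst n 0 * g 0 := by
    have hz : stirlingFirst n (n+1) * g (n+1) = 0 := by rw [stirling_top]; ring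
    calc ∑ m ∈ Finset.range (n + 1), stirlingFirst n m * g m
        = ∑ m ∈ Finset.range (n + 2), stirlingFirst n m * g m := by
          rw [Finset.sum_range_succ (fun m => stirlingFirst n m * g m) (n+1), hz, add_zero]
      _ = _ := Finset.sum_range_succ' (fun m => stirlingFirst n m * g m) (n+1)
  rw [h2]; ring

/-- The paper's Lemma 4.4: the `n`-th derivative of `f ∘ ln` for `x > 0`. -/
theorem iteratedDeriv_comp_log (f : ℝ → ℝ) (hf : ContDiff ℝ (⊤ : ℕ∞) f) (n : ℕ)
    (x : ℝ) (hx : 0 < x) :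
    iteratedDeriv n (fun y => f (Real.log y)) x =
      (∑ m ∈ Finset.range (n + 1), stirlingFirst n m * iteratedDeriv m f (Real.log x)) /
        x ^ n := by
  induction n generalizing x with
  | zero =>
    simp [stirlingFirst, descPochhammer_zero]
  | succ n ih =>
    have hx' : x ≠ 0 := hx.ne'
    rw [iteratedDeriv_succ]
    have heq : deriv (iteratedDeriv n (fun y => f (Real.log y))) x
        = deriv (fun y => (∑ m ∈ Finset.range (n + 1),
            stirlingFirst n m * iteratedDeriv m f (Real.log y)) / y ^ n) x := by
      apply Filter.EventuallyEq.deriv_eq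
      filter_upwards [Ioi_mem_nhds hx] with y hy
      exact ih y hy
    rw [heq]
    -- derivative of each term
    have hterm : ∀ m : ℕ, HasDerivAt (fun y => iteratedDeriv m f (Real.log y))
        (iteratedDeriv (m+1) f (Real.log x) * x⁻¹) x := by
      intro m
      have h1 : HasDerivAt Real.log x⁻¹ x := Real.hasDerivAt_log hx'
      have h2 : HasDerivAt (iteratedDeriv m f) (iteratedDeriv (m+1) f (Real.log x))
          (Real.log x) := by
        have hd := (hf.differentiable_iteratedDeriv m
          (by exact_mod_cast lt_top_iff_ne_top.2 (by simp))).differentiableAt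
            (x := Real.log x)
        have := hd.hasDerivAt
        rwa [← iteratedDeriv_succ] at this
      exact h2.comp x h1
    have hsum : HasDerivAt (fun y => ∑ m ∈ Finset.range (n + 1),
        stirlingFirst n m * iteratedDeriv m f (Real.log y))
        (∑ m ∈ Finset.range (n + 1),
          stirlingFirst n m * (iteratedDeriv (m+1) f (Real.log x) * x⁻¹)) x := by
      apply HasDerivAt.fun_sum
      intro m _
      exact (hterm m).const_mul _
    have hdiv := hsum.fun_div (hasDerivAt_pow n x) (pow_ne_zero n hx')
    rw [hdiv.deriv]
    set S := ∑ m ∈ Finset.range (n + 1), stirlingFirst n m * iteratedDeriv (m+1) f (Real.log x)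
      with hS
    set T := ∑ m ∈ Finset.range (n + 1), stirlingFirst n m * iteratedDeriv m f (Real.log x)
      with hT
    have hSx : ∑ m ∈ Finset.range (n + 1),
        stirlingFirst n m * (iteratedDeriv (m+1) f (Real.log x) * x⁻¹) = S * x⁻¹ := by
      rw [hS, Finset.sum_mul]
      exact Finset.sum_congr rfl (fun m _ => by ring)
    have hnum : ∑ m ∈ Finset.range (n + 1 + 1),
        stirlingFirst (n+1) m * iteratedDeriv m f (Real.log x) = S - n * T := by
      exact stirling_sum n (fun m => iteratedDeriv m f (Real.log x))
    rw [hSx, hnum]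
    have hpow : (n : ℝ) * x ^ (n - 1) * x = n * x ^ n := by
      cases n with
      | zero => simp
      | succ k => rw [Nat.add_sub_cancel, mul_assoc, ← pow_succ]
    have h3 : x * (T * ((n:ℝ) * x ^ (n-1))) = T * ((n:ℝ) * x ^ n) := by
      rw [← hpow]; ring
    field_simp
    linear_combination (-(x ^ (n + 1))) * h3
end

section
/- Let $f : \mathbb{R} \to \mathbb{R}$ be smooth, let $m \ge 1$ be a natural number, and let $x \ne 0$. Then $\frac{d^m}{dx^m}\big[f(1/x)\big] = \sum_{k=1}^{m} \binom{m-1}{k-1} \frac{m!}{k!}\, \frac{(-1)^m}{x^{m+k}}\, f^{(k)}(1/x)$. -/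
lemma natid (n i : ℕ) (hi : i ≤ n) :
    (n+2) * (n+1).choose (i+1) = (n+i+3) * n.choose (i+1) + (i+2) * n.choose i := by
  have h := Nat.choose_succ_right_eq n i
  rw [Nat.choose_succ_succ]
  zify [hi] at h ⊢
  linear_combination -h

lemma coeff_rec (n i : ℕ) (hi : i ≤ n) :
    ((n+1).choose (i+1) : ℝ) * (((n+2).factorial : ℝ) / ((i+2).factorial : ℝ)) =
      ((n:ℝ)+(i:ℝ)+3) * ((n.choose (i+1) : ℝ) * (((n+1).factorial : ℝ) / ((i+2).factorial : ℝ))) +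
      (n.choose i : ℝ) * (((n+1).factorial : ℝ) / ((i+1).factorial : ℝ)) := by
  have h : ((n:ℝ)+2) * ((n+1).choose (i+1) : ℝ)
      = ((n:ℝ)+(i:ℝ)+3) * (n.choose (i+1) : ℝ) + ((i:ℝ)+2) * (n.choose i : ℝ) := by
    exact_mod_cast congrArg (Nat.cast (R := ℝ)) (natid n i hi)
  have hf1 : ((n+2).factorial : ℝ) = ((n:ℝ)+2) * ((n+1).factorial : ℝ) := by
    rw [show n+2 = (n+1)+1 by ring, Nat.factorial_succ]; push_cast; ring
  have hf2 : ((i+2).factorial : ℝ) = ((i:ℝ)+2) * ((i+1).factorial : ℝ) := by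
    rw [show i+2 = (i+1)+1 by ring, Nat.factorial_succ]; push_cast; ring
  have h1 : ((i+1).factorial : ℝ) ≠ 0 := by exact_mod_cast (i+1).factorial_ne_zero
  have h3 : ((i:ℝ)+2) ≠ 0 := by positivity
  rw [hf1, hf2]
  have e : ((n+1).factorial : ℝ) / ((i+1).factorial : ℝ)
      = ((i:ℝ)+2) * (((n+1).factorial : ℝ) / (((i:ℝ)+2) * ((i+1).factorial : ℝ))) := by
    field_simp
  rw [e]
  linear_combination (((n+1).factorial : ℝ) / (((i:ℝ)+2) * ((i+1).factorial : ℝ))) * h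

lemma hasDerivAt_term (F : ℝ → ℝ) (hF : Differentiable ℝ F) (c d : ℝ) (nn : ℕ)
    {x : ℝ} (hx : x ≠ 0) :
    HasDerivAt (fun y : ℝ => c * (d / y ^ nn) * F y⁻¹)
      (c * (d / x ^ nn) * deriv F x⁻¹ * (-(x ^ 2)⁻¹)
        + c * d * (-(nn : ℝ)) / x ^ (nn + 1) * F x⁻¹) x := by
  have hzp := hasDerivAt_zpow (-(nn:ℤ)) x (Or.inl hx)
  have hcomp : HasDerivAt (fun y : ℝ => F y⁻¹) (deriv F x⁻¹ * (-(x ^ 2)⁻¹)) x :=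
    (hF x⁻¹).hasDerivAt.comp x (hasDerivAt_inv hx)
  have h := (hzp.mul hcomp).const_mul (c * d)
  have hfun : (fun y : ℝ => c * (d / y ^ nn) * F y⁻¹)
      = fun y : ℝ => (c * d) * (y ^ (-(nn:ℤ)) * F y⁻¹) := by
    funext y; rw [zpow_neg, zpow_natCast]; ring
  rw [hfun]
  refine h.congr_deriv ?_
  symm
  rw [show (-(nn:ℤ)) - 1 = -(((nn+1:ℕ)):ℤ) by push_cast; ring]
  rw [zpow_neg, zpow_neg, zpow_natCast, zpow_natCast]
  field_simp
  push_cast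
  ring

/-- The paper's Lemma 4.11: the `m`-th derivative of `f (1/x)` for `x ≠ 0`, `m ≥ 1`. -/
theorem iteratedDeriv_comp_inv (f : ℝ → ℝ) (hf : ContDiff ℝ (⊤ : ℕ∞) f) (m : ℕ)
    (hm : 1 ≤ m) (x : ℝ) (hx : x ≠ 0) :
    iteratedDeriv m (fun y => f y⁻¹) x =
      ∑ k ∈ Finset.Icc 1 m,
        ((m - 1).choose (k - 1) : ℝ) * ((m.factorial : ℝ) / (k.factorial : ℝ)) *
          ((-1 : ℝ) ^ m / x ^ (m + k)) * iteratedDeriv k f x⁻¹ := by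
  induction m, hm using Nat.le_induction generalizing x hx with
  | base =>
      rw [iteratedDeriv_one]
      have hcomp : HasDerivAt (fun y : ℝ => f y⁻¹) (deriv f x⁻¹ * (-(x ^ 2)⁻¹)) x :=
        ((hf.differentiable (by simp)) x⁻¹).hasDerivAt.comp x (hasDerivAt_inv hx)
      rw [hcomp.deriv]
      simp only [Finset.Icc_self, Finset.sum_singleton, Nat.sub_self, Nat.choose_self,
        Nat.factorial_one, iteratedDeriv_one, pow_one]
      push_cast
      field_simp
  | succ n hn IH =>
      rw [iteratedDeriv_succ]
      have hev : iteratedDeriv n (fun y => f y⁻¹) =ᶠ[nhds x]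
          (fun y => ∑ k ∈ Finset.Icc 1 n,
            ((n - 1).choose (k - 1) : ℝ) * ((n.factorial : ℝ) / (k.factorial : ℝ)) *
              ((-1 : ℝ) ^ n / y ^ (n + k)) * iteratedDeriv k f y⁻¹) := by
        filter_upwards [eventually_ne_nhds hx] with y hy
        exact IH y hy
      rw [hev.deriv_eq]
      have hder : HasDerivAt (fun y => ∑ k ∈ Finset.Icc 1 n,
            ((n - 1).choose (k - 1) : ℝ) * ((n.factorial : ℝ) / (k.factorial : ℝ)) *
              ((-1 : ℝ) ^ n / y ^ (n + k)) * iteratedDeriv k f y⁻¹)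
          (∑ k ∈ Finset.Icc 1 n,
            (((n - 1).choose (k - 1) : ℝ) * ((n.factorial : ℝ) / (k.factorial : ℝ)) *
                ((-1 : ℝ) ^ n / x ^ (n + k)) * iteratedDeriv (k+1) f x⁻¹ * (-(x ^ 2)⁻¹)
              + ((n - 1).choose (k - 1) : ℝ) * ((n.factorial : ℝ) / (k.factorial : ℝ)) *
                ((-1 : ℝ) ^ n) * (-((n + k : ℕ) : ℝ)) / x ^ (n + k + 1)
                  * iteratedDeriv k f x⁻¹)) x := by
        apply HasDerivAt.fun_sum
        intro k hk
        have hd : Differentiable ℝ (iteratedDeriv k f) :=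
          hf.differentiable_iteratedDeriv k (by exact_mod_cast ENat.coe_lt_top k)
        have h := hasDerivAt_term (iteratedDeriv k f) hd
          (((n - 1).choose (k - 1) : ℝ) * ((n.factorial : ℝ) / (k.factorial : ℝ)))
          ((-1 : ℝ) ^ n) (n + k) hx
        rw [← iteratedDeriv_succ] at h
        convert h using 1
        try ring
      rw [hder.deriv]
      -- algebra
      have e1 : Finset.Icc 1 (n+1) = insert (n+1) (Finset.Icc 1 n) := by
        ext a; simp only [Finset.mem_Icc, Finset.mem_insert]; omega
      have e2 : Finset.Icc 1 (n+1) = insert 1 (Finset.Icc 2 (n+1)) := by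
        ext a; simp only [Finset.mem_Icc, Finset.mem_insert]; omega
      have e3 : Finset.Icc 2 (n+1) = (Finset.Icc 1 n).map ⟨fun a => a+1, add_left_injective 1⟩ := by
        ext a
        simp only [Finset.mem_Icc, Finset.mem_map, Function.Embedding.coeFn_mk]
        constructor
        · intro h; exact ⟨a - 1, by omega, by omega⟩
        · rintro ⟨b, hb, rfl⟩; beta_reduce; omega
      -- abbreviations
      set P : ℕ → ℝ := fun j =>
        ((n - 1).choose (j - 1) : ℝ) * ((n.factorial : ℝ) / (j.factorial : ℝ)) *
          ((-1 : ℝ) ^ n) * (-((n + j : ℕ) : ℝ)) / x ^ (n + j + 1) * iteratedDeriv j f x⁻¹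
        with hP
      set Q : ℕ → ℝ := fun k =>
        ((n - 1).choose (k - 1) : ℝ) * ((n.factorial : ℝ) / (k.factorial : ℝ)) *
          ((-1 : ℝ) ^ n / x ^ (n + k)) * iteratedDeriv (k+1) f x⁻¹ * (-(x ^ 2)⁻¹) with hQ
      set D : ℕ → ℝ := fun j =>
        ((n + 1 - 1).choose (j - 1) : ℝ) * (((n+1).factorial : ℝ) / (j.factorial : ℝ)) *
          ((-1 : ℝ) ^ (n+1) / x ^ (n + 1 + j)) * iteratedDeriv j f x⁻¹ with hD
      show ∑ k ∈ Finset.Icc 1 n, (Q k + P k) = ∑ j ∈ Finset.Icc 1 (n+1), D j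
      rw [Finset.sum_add_distrib]
      have hS1 : ∑ k ∈ Finset.Icc 1 n, P k = P 1 + ∑ k ∈ Finset.Icc 1 n, P (k+1) := by
        have hPtop : P (n+1) = 0 := by
          have h0 : (n - 1).choose n = 0 := Nat.choose_eq_zero_of_lt (by omega)
          simp only [hP, Nat.add_sub_cancel, h0]
          push_cast
          ring
        have : ∑ k ∈ Finset.Icc 1 (n+1), P k = ∑ k ∈ Finset.Icc 1 n, P k := by
          rw [e1, Finset.sum_insert (by simp), hPtop, zero_add]
        rw [← this, e2, Finset.sum_insert (by simp), e3, Finset.sum_map]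
        simp only [Function.Embedding.coeFn_mk]
      rw [hS1]
      rw [show ∑ j ∈ Finset.Icc 1 (n+1), D j = D 1 + ∑ k ∈ Finset.Icc 1 n, D (k+1) by
        rw [e2, Finset.sum_insert (by simp), e3, Finset.sum_map]
        simp only [Function.Embedding.coeFn_mk]]
      have hbase : P 1 = D 1 := by
        simp only [hP, hD, Nat.add_sub_cancel, Nat.sub_self, Nat.choose_zero_right,
          Nat.factorial_one, Nat.factorial_succ]
        push_cast
        field_simp
        ring
      have hstep : ∀ k ∈ Finset.Icc 1 n, Q k + P (k+1) = D (k+1) := by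
        intro k hk
        simp only [Finset.mem_Icc] at hk
        obtain ⟨i, rfl⟩ : ∃ i, k = i + 1 := ⟨k - 1, by omega⟩
        obtain ⟨p, rfl⟩ : ∃ p, n = p + 1 := ⟨n - 1, by omega⟩
        have hip : i ≤ p := by omega
        have hc := coeff_rec p i hip
        simp only [hP, hQ, hD, Nat.add_sub_cancel, show i+1+1 = i+2 from rfl,
          show p+1+1 = p+2 from rfl, show i+1-1 = i from rfl, show i+2-1 = i+1 from rfl,
          show p+1-1 = p from rfl]
        push_cast
        linear_combination ((-1:ℝ)^(p+1) * iteratedDeriv (i+2) f x⁻¹ / x^(p+i+4)) * hc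
      rw [show ∑ k ∈ Finset.Icc 1 n, D (k+1) = ∑ k ∈ Finset.Icc 1 n, (Q k + P (k+1)) from
        (Finset.sum_congr rfl hstep).symm, Finset.sum_add_distrib, hbase]
      ring
end

section
/- Let $\beta \in \mathbb{R}$, let $f : \mathbb{R} \to \mathbb{R}$ be smooth, and let $n, a \in \mathbb{N}$. Then for all $x \in \mathbb{R}$, $\frac{d^a}{dx^a}\big[L_n^{\beta}(x) f(x)\big] = L_n^{\beta}(x)\, f^{(a)}(x) + \sum_{m=1}^{n} \sum_{k=1}^{m} \binom{n}{m} \binom{m-1}{k-1} \frac{m!}{k!}\, L_{n-m}^{\beta}(x)\, (-1)^k (a)_k\, f^{(a-k)}(x)$, where summands with $k > a$ vanish because $(a)_k = 0$ (so the derivative order $a-k$ may be read as truncated natural subtraction). -/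
/-- The associated Laguerre polynomials in the paper's normalization:
`Lₙᵝ(x) = n! ∑_{k=0}^{n} ((-1)ᵏ / k!) C(n+β, n-k) xᵏ`, where
`C(n+β, n-k) = (β+k+1)(β+k+2)⋯(β+n) / (n-k)!`. -/
noncomputable def laguerre (β : ℝ) (n : ℕ) (x : ℝ) : ℝ :=
  (n.factorial : ℝ) *
    ∑ k ∈ Finset.range (n + 1),
      ((-1 : ℝ) ^ k / (k.factorial : ℝ)) *
        ((∏ i ∈ Finset.range (n - k), (β + k + 1 + i)) / ((n - k).factorial : ℝ)) * x ^ k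

open Finset

noncomputable def gb (c : ℝ) (s : ℕ) : ℝ := (∏ r ∈ range s, (c + r)) / s.factorial

lemma gb_shift (c : ℝ) (N : ℕ) :
    ∏ r ∈ range (N + 1), (c + r) = c * ∏ r ∈ range N, (c + 1 + r) := by
  rw [Finset.prod_range_succ']
  simp only [Nat.cast_zero, add_zero, mul_comm]
  congr 1
  refine Finset.prod_congr rfl fun r _ => ?_
  push_cast; ring

lemma gb_sum (c : ℝ) (N : ℕ) : ∑ s ∈ range (N + 1), gb c s = gb (c + 1) N := by
  induction N with
  | zero => simp [gb]
  | succ N ih =>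
    rw [Finset.sum_range_succ, ih]
    unfold gb
    rw [gb_shift, Finset.prod_range_succ]
    have h1 : ((N + 1).factorial : ℝ) = (N.factorial : ℝ) * (N + 1) := by
      rw [Nat.factorial_succ]; push_cast; ring
    have h2 : (N.factorial : ℝ) ≠ 0 := Nat.cast_ne_zero.2 N.factorial_ne_zero
    field_simp
    rw [h1]
    ring

lemma tri (M : ℕ) (g : ℕ → ℕ → ℝ) :
    ∑ i ∈ range M, ∑ p ∈ range i, g i p = ∑ p ∈ range M, ∑ i ∈ Ico (p + 1) M, g i p := by
  induction M with
  | zero => simp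
  | succ M ih =>
    rw [Finset.sum_range_succ, ih]
    symm
    rw [Finset.sum_range_succ]
    have h1 : ∀ p ∈ range M, ∑ i ∈ Ico (p+1) (M+1), g i p
        = ∑ i ∈ Ico (p+1) M, g i p + g M p := by
      intro p hp
      simp only [mem_range] at hp
      rw [Finset.sum_Ico_succ_top (by omega : p + 1 ≤ M)]
    rw [Finset.sum_congr rfl h1, Finset.sum_add_distrib]
    have h2 : ∑ i ∈ Ico (M+1) (M+1), g i M = 0 := by simp
    rw [h2, Finset.sum_range]
    ring

lemma tri2 (n : ℕ) (g : ℕ → ℕ → ℝ) :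
    ∑ i ∈ range n, ∑ t ∈ range (i + 1), g i t = ∑ t ∈ range n, ∑ i ∈ Ico t n, g i t := by
  induction n with
  | zero => simp
  | succ n ih =>
    rw [Finset.sum_range_succ, ih]
    symm
    rw [Finset.sum_range_succ]
    have h1 : ∀ t ∈ range n, ∑ i ∈ Ico t (n+1), g i t
        = ∑ i ∈ Ico t n, g i t + g n t := by
      intro t ht
      simp only [mem_range] at ht
      rw [Finset.sum_Ico_succ_top (by omega : t ≤ n)]
    rw [Finset.sum_congr rfl h1, Finset.sum_add_distrib]
    have h2 : ∑ i ∈ Ico n (n+1), g i n = g n n := by simp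
    rw [h2, Finset.sum_range_succ]
    ring

lemma icc_swap (n : ℕ) (T : ℕ → ℕ → ℝ) :
    ∑ m ∈ Icc 1 n, ∑ k ∈ Icc 1 m, T m k = ∑ k ∈ Icc 1 n, ∑ m ∈ Icc k n, T m k := by
  induction n with
  | zero => simp
  | succ n ih =>
    rw [Finset.sum_Icc_succ_top (by omega : 1 ≤ n + 1), ih]
    symm
    rw [Finset.sum_Icc_succ_top (by omega : 1 ≤ n + 1)]
    have h1 : ∀ k ∈ Icc 1 n, ∑ m ∈ Icc k (n+1), T m k
        = ∑ m ∈ Icc k n, T m k + T (n+1) k := by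
      intro k hk
      simp only [mem_Icc] at hk
      rw [Finset.sum_Icc_succ_top (by omega : k ≤ n + 1)]
    rw [Finset.sum_congr rfl h1, Finset.sum_add_distrib]
    have h2 : ∑ m ∈ Icc (n+1) (n+1), T m (n+1) = T (n+1) (n+1) := by simp
    rw [h2, Finset.sum_Icc_succ_top (by omega : 1 ≤ n + 1)]
    ring

lemma sum_Ico_choose (n j : ℕ) : ∀ a b : ℕ, a ≤ b → b ≤ n →
    ∑ i ∈ Ico a b, (n - i - 1).choose j + (n - b).choose (j + 1) = (n - a).choose (j + 1) := by
  intro a b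
  induction b with
  | zero => intro hab _; interval_cases a; simp
  | succ b ih =>
    intro hab hb
    rcases Nat.eq_or_lt_of_le hab with h | h
    · simp [← h]
    · have hab' : a ≤ b := by omega
      rw [Finset.sum_Ico_succ_top hab', add_assoc]
      have e1 : n - (b+1) = n - b - 1 := by omega
      have e2 : n - b = (n - b - 1) + 1 := by omega
      have key : (n-b-1).choose j + (n-b-1).choose (j+1) = (n-b).choose (j+1) := by
        conv_rhs => rw [e2]
        rw [Nat.choose_succ_succ']
      rw [e1, key]
      exact ih hab' (by omega)

noncomputable def lagc (β : ℝ) (n k : ℕ) : ℝ :=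
  (n.factorial : ℝ) * ((-1 : ℝ)^k / k.factorial) *
    ((∏ i ∈ range (n - k), (β + k + 1 + i)) / (n - k).factorial)

lemma laguerre_eq (β : ℝ) (n : ℕ) (x : ℝ) :
    laguerre β n x = ∑ k ∈ range (n + 1), lagc β n k * x ^ k := by
  unfold laguerre lagc
  rw [Finset.mul_sum]
  exact Finset.sum_congr rfl fun k _ => by ring

lemma hasDerivAt_laguerre (β : ℝ) (n : ℕ) (x : ℝ) :
    HasDerivAt (laguerre β n) (∑ k ∈ range (n + 1), lagc β n k * (k * x ^ (k - 1))) x := by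
  have h : laguerre β n = fun x => ∑ k ∈ range (n + 1), lagc β n k * x ^ k :=
    funext (laguerre_eq β n)
  rw [h]
  exact HasDerivAt.fun_sum fun k _ => (hasDerivAt_pow k x).const_mul _

lemma differentiable_laguerre (β : ℝ) (n : ℕ) : Differentiable ℝ (laguerre β n) :=
  fun x => (hasDerivAt_laguerre β n x).differentiableAt

lemma contDiff_laguerre (β : ℝ) (n : ℕ) : ContDiff ℝ (⊤ : ℕ∞) (laguerre β n) := by
  have h : laguerre β n = fun x => ∑ k ∈ range (n + 1), lagc β n k * x ^ k :=
    funext (laguerre_eq β n)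
  rw [h]
  exact ContDiff.sum fun k _ => contDiff_const.mul (contDiff_id.pow k)

lemma lagc_scaled (β : ℝ) (n i t : ℕ) :
    (n.factorial / i.factorial : ℝ) * lagc β i t
      = (n.factorial : ℝ) * ((-1 : ℝ)^t / t.factorial) * gb (β + t + 1) (i - t) := by
  unfold lagc gb
  have h : (i.factorial : ℝ) ≠ 0 := Nat.cast_ne_zero.2 i.factorial_ne_zero
  field_simp

lemma lagc_deriv_coeff (β : ℝ) (n t : ℕ) (h : t < n) :
    lagc β n (t + 1) * ((t : ℝ) + 1)
      = -((n.factorial : ℝ) * ((-1 : ℝ)^t / t.factorial) * gb (β + t + 2) (n - t - 1)) := by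
  unfold lagc gb
  have e : n - (t + 1) = n - t - 1 := by omega
  have hp : ∏ i ∈ range (n - (t+1)), (β + (t+1 : ℕ) + 1 + i)
      = ∏ i ∈ range (n - t - 1), (β + t + 2 + i) := by
    rw [e]
    refine Finset.prod_congr rfl fun r _ => ?_
    push_cast; ring
  rw [hp, e]
  have hf : ((t+1).factorial : ℝ) = (t+1) * t.factorial := by
    rw [Nat.factorial_succ]; push_cast; ring
  rw [hf]
  have h1 : (t.factorial : ℝ) ≠ 0 := Nat.cast_ne_zero.2 t.factorial_ne_zero
  have h2 : ((t : ℝ) + 1) ≠ 0 := by positivity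
  have h3 : (((n - t - 1).factorial : ℝ)) ≠ 0 := Nat.cast_ne_zero.2 (Nat.factorial_ne_zero _)
  field_simp
  ring

lemma deriv_laguerre (β : ℝ) (n : ℕ) (x : ℝ) :
    deriv (laguerre β n) x = -∑ i ∈ range n, (n.factorial / i.factorial : ℝ) * laguerre β i x := by
  rw [(hasDerivAt_laguerre β n x).deriv, Finset.sum_range_succ']
  have h0 : lagc β n 0 * ((0:ℕ) * x ^ (0 - 1)) = 0 := by simp
  rw [h0, add_zero]
  have hrhs : ∀ i ∈ range n, (n.factorial / i.factorial : ℝ) * laguerre β i x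
      = ∑ t ∈ range (i + 1), (n.factorial / i.factorial : ℝ) * lagc β i t * x ^ t := by
    intro i _
    rw [laguerre_eq, Finset.mul_sum]
    exact Finset.sum_congr rfl fun t _ => by ring
  rw [Finset.sum_congr rfl hrhs, tri2, ← Finset.sum_neg_distrib]
  refine Finset.sum_congr rfl fun t ht => ?_
  simp only [mem_range] at ht
  simp only [Nat.add_sub_cancel]
  have inner : ∑ i ∈ Ico t n, (n.factorial / i.factorial : ℝ) * lagc β i t * x ^ t
      = ((n.factorial : ℝ) * ((-1:ℝ)^t / t.factorial) * gb (β + t + 2) (n - t - 1)) * x ^ t := by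
    rw [← Finset.sum_mul]
    congr 1
    have h : ∀ i ∈ Ico t n, (n.factorial / i.factorial : ℝ) * lagc β i t
        = (n.factorial : ℝ) * ((-1:ℝ)^t / t.factorial) * gb (β + t + 1) (i - t) :=
      fun i _ => lagc_scaled β n i t
    rw [Finset.sum_congr rfl h, ← Finset.mul_sum]
    congr 1
    rw [Finset.sum_Ico_eq_sum_range]
    simp only [Nat.add_sub_cancel_left]
    have e : range (n - t) = range ((n - t - 1) + 1) := by congr 1; omega
    rw [e, gb_sum]
    congr 1
    ring
  rw [inner]
  have hc : ((t + 1 : ℕ) : ℝ) = (t : ℝ) + 1 := by push_cast; ring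
  rw [hc, ← mul_assoc]
  rw [show lagc β n (t+1) * ((t:ℝ)+1) = _ from lagc_deriv_coeff β n t ht]
  ring

lemma iteratedDeriv_laguerre (β : ℝ) (n : ℕ) : ∀ (j : ℕ), 1 ≤ j → ∀ (x : ℝ),
    iteratedDeriv j (laguerre β n) x
      = (-1 : ℝ)^j * ∑ i ∈ range (n + 1 - j),
          (n.factorial / i.factorial : ℝ) * ((n - i - 1).choose (j - 1) : ℝ) * laguerre β i x := by
  intro j
  induction j with
  | zero => omega
  | succ j ih =>
    intro _ x
    rcases Nat.eq_zero_or_pos j with hj | hj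
    · subst hj
      rw [iteratedDeriv_one, deriv_laguerre]
      simp
    set M := n + 1 - j with hM
    have hfun : iteratedDeriv j (laguerre β n) = fun y => (-1 : ℝ)^j *
        ∑ i ∈ range M, (n.factorial / i.factorial : ℝ) * ((n - i - 1).choose (j - 1) : ℝ) * laguerre β i y :=
      funext (ih hj)
    rw [iteratedDeriv_succ, hfun]
    have hd : HasDerivAt (fun y => (-1 : ℝ)^j *
        ∑ i ∈ range M, (n.factorial / i.factorial : ℝ) * ((n - i - 1).choose (j - 1) : ℝ) * laguerre β i y)
        ((-1 : ℝ)^j * ∑ i ∈ range M,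
          (n.factorial / i.factorial : ℝ) * ((n - i - 1).choose (j - 1) : ℝ) * deriv (laguerre β i) x) x :=
      HasDerivAt.const_mul _ (HasDerivAt.fun_sum fun i _ =>
        ((differentiable_laguerre β i x).hasDerivAt).const_mul _)
    rw [hd.deriv]
    have step1 : ∀ i ∈ range M,
        (n.factorial / i.factorial : ℝ) * ((n - i - 1).choose (j - 1) : ℝ) * deriv (laguerre β i) x
        = -∑ p ∈ range i, (n.factorial / i.factorial : ℝ) * ((n - i - 1).choose (j - 1) : ℝ) *
            ((i.factorial / p.factorial : ℝ) * laguerre β p x) := by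
      intro i _
      rw [deriv_laguerre, mul_neg, Finset.mul_sum]
    have hsign : ∀ S : ℝ, (-1 : ℝ)^j * -S = (-1 : ℝ)^(j+1) * S := fun S => by
      rw [pow_succ]; ring
    rw [Finset.sum_congr rfl step1, Finset.sum_neg_distrib, hsign, tri M]
    rcases Nat.eq_zero_or_pos M with hM0 | hMpos
    · rw [hM0]
      have h0 : n + 1 - (j + 1) = 0 := by omega
      rw [h0]
      simp
    obtain ⟨K, hK⟩ : ∃ K, M = K + 1 := ⟨M - 1, by omega⟩
    have hjn : j ≤ n := by omega
    rw [hK, Finset.sum_range_succ]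
    have hlast : ∑ i ∈ Ico (K + 1) (K + 1),
        (n.factorial / i.factorial : ℝ) * ((n - i - 1).choose (j - 1) : ℝ) *
          ((i.factorial / K.factorial : ℝ) * laguerre β K x) = 0 := by simp
    rw [hlast, add_zero]
    have hidx : n + 1 - (j + 1) = K := by omega
    rw [hidx]
    congr 1
    refine Finset.sum_congr rfl fun p hp => ?_
    simp only [mem_range] at hp
    have hterm : ∀ i ∈ Ico (p + 1) (K + 1),
        (n.factorial / i.factorial : ℝ) * ((n - i - 1).choose (j - 1) : ℝ) *
          ((i.factorial / p.factorial : ℝ) * laguerre β p x)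
        = ((n.factorial / p.factorial : ℝ) * laguerre β p x) * ((n - i - 1).choose (j - 1) : ℝ) := by
      intro i _
      have hi : (i.factorial : ℝ) ≠ 0 := Nat.cast_ne_zero.2 i.factorial_ne_zero
      field_simp
    rw [Finset.sum_congr rfl hterm, ← Finset.mul_sum]
    have hnat : ∑ i ∈ Ico (p + 1) (K + 1), ((n - i - 1).choose (j - 1)) = (n - p - 1).choose j := by
      have h := sum_Ico_choose n (j - 1) (p + 1) (K + 1) (by omega) (by omega)
      rw [show j - 1 + 1 = j from by omega] at h
      rw [show n - (K + 1) = j - 1 from by omega] at h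
      rw [Nat.choose_eq_zero_of_lt (by omega : j - 1 < j), add_zero] at h
      rw [show n - (p + 1) = n - p - 1 from by omega] at h
      exact h
    rw [← Nat.cast_sum, hnat]
    have hj1 : j + 1 - 1 = j := by omega
    rw [hj1]
    ring

lemma leibniz (g f : ℝ → ℝ) (hg : ContDiff ℝ (⊤ : ℕ∞) g) (hf : ContDiff ℝ (⊤ : ℕ∞) f) : ∀ (a : ℕ) (x : ℝ),
    iteratedDeriv a (fun y => g y * f y) x
      = ∑ k ∈ range (a + 1), (a.choose k : ℝ) * iteratedDeriv k g x * iteratedDeriv (a - k) f x := by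
  intro a
  induction a with
  | zero => intro x; simp
  | succ a ih =>
    intro x
    have hG : ∀ k, Differentiable ℝ (iteratedDeriv k g) := fun k =>
      hg.differentiable_iteratedDeriv k (by exact_mod_cast WithTop.coe_lt_top _)
    have hF : ∀ k, Differentiable ℝ (iteratedDeriv k f) := fun k =>
      hf.differentiable_iteratedDeriv k (by exact_mod_cast WithTop.coe_lt_top _)
    have hGd : ∀ k (y : ℝ), HasDerivAt (iteratedDeriv k g) (iteratedDeriv (k+1) g y) y := fun k y => by
      rw [iteratedDeriv_succ]; exact (hG k y).hasDerivAt
    have hFd : ∀ k (y : ℝ), HasDerivAt (iteratedDeriv k f) (iteratedDeriv (k+1) f y) y := fun k y => by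
      rw [iteratedDeriv_succ]; exact (hF k y).hasDerivAt
    rw [iteratedDeriv_succ, funext ih]
    have hd : HasDerivAt (fun y => ∑ k ∈ range (a+1),
        (a.choose k : ℝ) * iteratedDeriv k g y * iteratedDeriv (a-k) f y)
        (∑ k ∈ range (a+1), ((a.choose k : ℝ) * iteratedDeriv (k+1) g x * iteratedDeriv (a-k) f x
          + (a.choose k : ℝ) * iteratedDeriv k g x * iteratedDeriv (a-k+1) f x)) x := by
      refine HasDerivAt.fun_sum fun k _ => ?_
      have h2 := ((hGd k x).const_mul ((a.choose k : ℝ))).fun_mul (hFd (a-k) x)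
      convert h2 using 1
    rw [hd.deriv, Finset.sum_add_distrib]
    rw [Finset.sum_range_succ'
      (fun k => ((a+1).choose k : ℝ) * iteratedDeriv k g x * iteratedDeriv (a+1-k) f x) (a+1)]
    have e1 : ∀ t ∈ range (a+1),
        ((a+1).choose (t+1) : ℝ) * iteratedDeriv (t+1) g x * iteratedDeriv (a+1-(t+1)) f x
        = (a.choose t : ℝ) * iteratedDeriv (t+1) g x * iteratedDeriv (a-t) f x
          + (a.choose (t+1) : ℝ) * iteratedDeriv (t+1) g x * iteratedDeriv (a-t) f x := by
      intro t _
      rw [show a + 1 - (t+1) = a - t from by omega, Nat.choose_succ_succ]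
      push_cast; ring
    rw [Finset.sum_congr rfl e1, Finset.sum_add_distrib]
    have e2 : ∑ k ∈ range (a+1), (a.choose k : ℝ) * iteratedDeriv k g x * iteratedDeriv (a-k+1) f x
        = ∑ t ∈ range (a+1), (a.choose (t+1) : ℝ) * iteratedDeriv (t+1) g x * iteratedDeriv (a-t) f x
          + ((a+1).choose 0 : ℝ) * iteratedDeriv 0 g x * iteratedDeriv (a+1-0) f x := by
      rw [Finset.sum_range_succ'
        (fun k => (a.choose k : ℝ) * iteratedDeriv k g x * iteratedDeriv (a-k+1) f x) a]
      have e3 : ∀ t ∈ range a,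
          (a.choose (t+1) : ℝ) * iteratedDeriv (t+1) g x * iteratedDeriv (a-(t+1)+1) f x
          = (a.choose (t+1) : ℝ) * iteratedDeriv (t+1) g x * iteratedDeriv (a-t) f x := by
        intro t ht; simp only [mem_range] at ht
        rw [show a - (t+1) + 1 = a - t from by omega]
      rw [Finset.sum_congr rfl e3]
      rw [Finset.sum_range_succ
        (fun t => (a.choose (t+1) : ℝ) * iteratedDeriv (t+1) g x * iteratedDeriv (a-t) f x) a]
      simp [Nat.choose_succ_self]
    rw [e2]
    ring

lemma fall_zero_of_lt (a k : ℕ) (h : a < k) : fallingFactorial (a : ℝ) k = 0 :=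
  Finset.prod_eq_zero (mem_range.2 h) (by simp)

lemma choose_mul_fact (a k : ℕ) :
    (a.choose k : ℝ) * k.factorial = fallingFactorial (a : ℝ) k := by
  rcases le_or_gt k a with h | h
  · have hd : fallingFactorial (a : ℝ) k = (a.descFactorial k : ℝ) := by
      rw [Nat.descFactorial_eq_prod_range, Nat.cast_prod]
      unfold fallingFactorial
      refine Finset.prod_congr rfl fun i hi => ?_
      simp only [mem_range] at hi
      rw [Nat.cast_sub (by omega)]
    rw [hd, Nat.descFactorial_eq_factorial_mul_choose]
    push_cast; ring
  · rw [fall_zero_of_lt a k h, Nat.choose_eq_zero_of_lt h]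
    simp

lemma range_shift (a : ℕ) (W : ℕ → ℝ) : ∑ t ∈ range a, W (t + 1) = ∑ k ∈ Icc 1 a, W k := by
  refine Finset.sum_nbij' (fun t => t + 1) (fun k => k - 1) ?_ ?_ ?_ ?_ ?_
  · intro t ht; simp only [mem_range] at ht; simp only [mem_Icc]; omega
  · intro k hk; simp only [mem_Icc] at hk; simp only [mem_range]; omega
  · intro t _; simp
  · intro k hk; simp only [mem_Icc] at hk; omega
  · intro t _; rfl

/-- Integer-order case of the paper's Theorem 4.12 (with the `m = 0` term restored):
truncated Leibniz rule for the product of an associated Laguerre polynomial and a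
smooth function. -/
theorem truncated_leibniz_laguerre (β : ℝ) (f : ℝ → ℝ) (hf : ContDiff ℝ (⊤ : ℕ∞) f)
    (n a : ℕ) (x : ℝ) :
    iteratedDeriv a (fun y => laguerre β n y * f y) x =
      laguerre β n x * iteratedDeriv a f x +
        ∑ m ∈ Finset.Icc 1 n, ∑ k ∈ Finset.Icc 1 m,
          (n.choose m : ℝ) * ((m - 1).choose (k - 1) : ℝ) *
            ((m.factorial : ℝ) / (k.factorial : ℝ)) * laguerre β (n - m) x *
            (-1 : ℝ) ^ k * fallingFactorial (a : ℝ) k * iteratedDeriv (a - k) f x := by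
  set W : ℕ → ℝ := fun k => (-1 : ℝ)^k * (fallingFactorial (a : ℝ) k / k.factorial) *
      (∑ i ∈ range (n + 1 - k),
        (n.factorial / i.factorial : ℝ) * ((n - i - 1).choose (k - 1) : ℝ) * laguerre β i x) *
      iteratedDeriv (a - k) f x with hW
  have hL := leibniz (laguerre β n) f (contDiff_laguerre β n) hf a x
  rw [hL, Finset.sum_range_succ'
    (fun k => (a.choose k : ℝ) * iteratedDeriv k (laguerre β n) x * iteratedDeriv (a - k) f x) a]
  have hzero : (a.choose 0 : ℝ) * iteratedDeriv 0 (laguerre β n) x * iteratedDeriv (a - 0) f x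
      = laguerre β n x * iteratedDeriv a f x := by
    simp [iteratedDeriv_zero]
  rw [hzero, add_comm]
  congr 1
  -- main sum
  have stepA : ∀ t ∈ range a,
      (a.choose (t+1) : ℝ) * iteratedDeriv (t+1) (laguerre β n) x * iteratedDeriv (a - (t+1)) f x
      = W (t+1) := by
    intro t _
    rw [iteratedDeriv_laguerre β n (t+1) (by omega) x]
    have hne : ((t+1).factorial : ℝ) ≠ 0 := Nat.cast_ne_zero.2 (Nat.factorial_ne_zero _)
    have hch : (a.choose (t+1) : ℝ) = fallingFactorial (a : ℝ) (t+1) / ((t+1).factorial : ℝ) := by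
      rw [← choose_mul_fact]
      field_simp
    simp only [hW]
    rw [hch]
    ring
  rw [Finset.sum_congr rfl stepA, range_shift a W]
  -- pad both sides to Icc 1 (a+n)
  have hWa : ∀ k, a < k → W k = 0 := by
    intro k hk
    simp only [hW]
    simp [fall_zero_of_lt a k hk]
  have hWn : ∀ k, n < k → W k = 0 := by
    intro k hk
    simp only [hW]
    rw [show n + 1 - k = 0 from by omega]
    simp
  have pad1 : ∑ k ∈ Icc 1 a, W k = ∑ k ∈ Icc 1 (a + n), W k := by
    refine Finset.sum_subset (Finset.Icc_subset_Icc_right (Nat.le_add_right a n)) ?_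
    intro k hk hnk
    simp only [mem_Icc] at hk hnk
    exact hWa k (by omega)
  have pad2 : ∑ k ∈ Icc 1 n, W k = ∑ k ∈ Icc 1 (a + n), W k := by
    refine Finset.sum_subset (Finset.Icc_subset_Icc_right (Nat.le_add_left n a)) ?_
    intro k hk hnk
    simp only [mem_Icc] at hk hnk
    exact hWn k (by omega)
  rw [pad1, ← pad2]
  -- identify RHS with ∑ W over Icc 1 n
  rw [icc_swap n]
  refine Finset.sum_congr rfl fun k hk => ?_
  simp only [mem_Icc] at hk
  symm
  have expand : W k = ∑ i ∈ range (n + 1 - k),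
      (-1 : ℝ)^k * (fallingFactorial (a : ℝ) k / k.factorial) *
        ((n.factorial / i.factorial : ℝ) * ((n - i - 1).choose (k - 1) : ℝ) * laguerre β i x) *
        iteratedDeriv (a - k) f x := by
    simp only [hW]
    rw [Finset.mul_sum, Finset.sum_mul]
  rw [expand]
  refine Finset.sum_nbij' (fun m => n - m) (fun i => n - i) ?_ ?_ ?_ ?_ ?_
  · intro m hm; simp only [mem_Icc] at hm; simp only [mem_range]; omega
  · intro i hi; simp only [mem_range] at hi; simp only [mem_Icc]; omega
  · intro m hm; simp only [mem_Icc] at hm; omega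
  · intro i hi; simp only [mem_range] at hi; omega
  · intro m hm
    simp only [mem_Icc] at hm
    have hm2 : m ≤ n := hm.2
    have e1 : n - (n - m) - 1 = m - 1 := by omega
    rw [e1]
    have hfm : (m.factorial : ℝ) ≠ 0 := Nat.cast_ne_zero.2 (Nat.factorial_ne_zero _)
    have hfnm : ((n - m).factorial : ℝ) ≠ 0 := Nat.cast_ne_zero.2 (Nat.factorial_ne_zero _)
    have hfk : (k.factorial : ℝ) ≠ 0 := Nat.cast_ne_zero.2 (Nat.factorial_ne_zero _)
    have hc : (n.choose m : ℝ) * m.factorial * (n - m).factorial = n.factorial := by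
      exact_mod_cast congrArg (Nat.cast : ℕ → ℝ) (Nat.choose_mul_factorial_mul_factorial hm2)
    have hchoose : (n.choose m : ℝ) = (n.factorial : ℝ) / (m.factorial * (n - m).factorial) := by
      rw [eq_div_iff (by positivity), ← mul_assoc]
      exact hc
    rw [hchoose]
    field_simp
end

section
/- Let $\alpha, y \in \mathbb{R}$ and $m \in \mathbb{N}$, and let $r \in \mathbb{R}$ satisfy $1 + r > 0$ and $y + \ln(1+r) > 0$. Then $\frac{d^m}{dr^m}\big[(y + \ln(1+r))^{\alpha}\big] = (1+r)^{-m} \sum_{u=0}^{m} S_1(m,u)\, (\alpha)_u\, (y + \ln(1+r))^{\alpha - u}$, where real powers $w^s$ (for $w > 0$, $s \in \mathbb{R}$) denote $e^{s \ln w}$. -/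
/-!
Writing `L = y + log (1 + r)`, the operator `θ = (1 + r) d/dr` acts as `d/dL`, so
`θᵘ Lᵅ = (α)_u L^(α-u)`, and `(1 + r)ᵐ dᵐ/drᵐ = θ (θ - 1) ⋯ (θ - m + 1)` is the falling
factorial polynomial in `θ`. Concretely, one differentiation of the closed form for `m`
yields the closed form for `m + 1` through the recurrence
`S₁(m+1, u+1) = S₁(m, u) - m S₁(m, u+1)`, which comes from
`x (x-1) ⋯ (x-m) = x (x-1) ⋯ (x-m+1) · (x - m)`.
-/

open Finset Set

lemma fallingFactorial_succ (a : ℝ) (u : ℕ) :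
    fallingFactorial a (u + 1) = fallingFactorial a u * (a - u) :=
  prod_range_succ _ _

lemma stirlingFirst_succ_succ (m u : ℕ) :
    stirlingFirst (m + 1) (u + 1) = stirlingFirst m u - m * stirlingFirst m (u + 1) := by
  simp only [stirlingFirst]
  rw [descPochhammer_succ_right, mul_sub, Polynomial.coeff_sub,
    Polynomial.coeff_mul_X, ← Polynomial.C_eq_natCast, Polynomial.coeff_mul_C, mul_comm]

lemma stirlingFirst_succ_zero (m : ℕ) : stirlingFirst (m + 1) 0 = -m * stirlingFirst m 0 := by
  simp only [stirlingFirst]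
  rw [descPochhammer_succ_right, mul_sub, Polynomial.coeff_sub,
    Polynomial.coeff_mul_X_zero, ← Polynomial.C_eq_natCast, Polynomial.coeff_mul_C]
  ring

lemma stirlingFirst_of_lt {m u : ℕ} (h : m < u) : stirlingFirst m u = 0 :=
  Polynomial.coeff_eq_zero_of_natDegree_lt (by simpa using h)

lemma sum_stirlingFirst_succ (m : ℕ) (c : ℕ → ℝ) :
    ∑ u ∈ range (m + 1 + 1), stirlingFirst (m + 1) u * c u =
      ∑ u ∈ range (m + 1), stirlingFirst m u * c (u + 1) -
        m * ∑ u ∈ range (m + 1), stirlingFirst m u * c u := by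
  have hshift : ∑ u ∈ range (m + 1), stirlingFirst m (u + 1) * c (u + 1) =
      ∑ u ∈ range (m + 1), stirlingFirst m u * c u - stirlingFirst m 0 * c 0 := by
    rw [sum_range_succ, stirlingFirst_of_lt (Nat.lt_succ_self m), sum_range_succ' _ m]
    ring
  rw [sum_range_succ' _ (m + 1), stirlingFirst_succ_zero]
  simp only [stirlingFirst_succ_succ, sub_mul, sum_sub_distrib, mul_assoc, ← mul_sum, hshift]
  ring

lemma HasDerivAt.fallingFactorial_mul_rpow {f : ℝ → ℝ} {f' x : ℝ} (hf : HasDerivAt f f' x)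
    (hfx : f x ≠ 0) (α : ℝ) (u : ℕ) :
    HasDerivAt (fun t => fallingFactorial α u * f t ^ (α - u))
      (fallingFactorial α (u + 1) * f x ^ (α - (u + 1 : ℕ)) * f') x := by
  refine ((hf.rpow_const (p := α - u) (Or.inl hfx)).const_mul _).congr_deriv ?_
  rw [fallingFactorial_succ]
  push_cast
  ring_nf

lemma HasDerivAt.div_one_add_pow {g : ℝ → ℝ} {g' x : ℝ} (hg : HasDerivAt g g' x)
    (hx : 1 + x ≠ 0) (m : ℕ) :
    HasDerivAt (fun t => g t / (1 + t) ^ m) ((g' * (1 + x) - m * g x) / (1 + x) ^ (m + 1)) x := by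
  have hpow : HasDerivAt (fun t : ℝ => (1 + t) ^ m) (m * (1 + x) ^ (m - 1) * 1) x :=
    ((hasDerivAt_id x).const_add 1).pow m
  refine (hg.div hpow (pow_ne_zero m hx)).congr_deriv ?_
  rcases m with _ | m
  · simp [hx]
  · rw [Nat.add_sub_cancel]
    field_simp
    ring

noncomputable def rpowLogDerivFormula (α y : ℝ) (m : ℕ) (r : ℝ) : ℝ :=
  (∑ u ∈ range (m + 1), stirlingFirst m u * fallingFactorial α u *
    (y + Real.log (1 + r)) ^ (α - u)) / (1 + r) ^ m

lemma hasDerivAt_rpowLogDerivFormula (α y : ℝ) (m : ℕ) {r : ℝ}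
    (hr : 0 < 1 + r) (hyr : 0 < y + Real.log (1 + r)) :
    HasDerivAt (rpowLogDerivFormula α y m) (rpowLogDerivFormula α y (m + 1) r) r := by
  have hlog : HasDerivAt (fun t => y + Real.log (1 + t)) (1 + r)⁻¹ r := by
    simpa using (((hasDerivAt_id r).const_add 1).log hr.ne').const_add y
  have hsum := HasDerivAt.fun_sum (u := range (m + 1)) fun u _ =>
    (hlog.fallingFactorial_mul_rpow hyr.ne' α u).const_mul (stirlingFirst m u)
  have hquot := hsum.div_one_add_pow hr.ne' m
  simp only [← mul_assoc] at hquot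
  refine hquot.congr_deriv ?_
  simp only [rpowLogDerivFormula, mul_assoc, sum_stirlingFirst_succ, sum_mul]
  congr 2
  refine sum_congr rfl fun u _ => ?_
  field_simp

theorem iteratedDeriv_eqOn_of_hasDerivAt {𝕜 F : Type*} [NontriviallyNormedField 𝕜]
    [NormedAddCommGroup F] [NormedSpace 𝕜 F] {U : Set 𝕜} (hU : IsOpen U) {g : 𝕜 → F}
    {f : ℕ → 𝕜 → F} (hg : EqOn g (f 0) U)
    (hf : ∀ n, ∀ x ∈ U, HasDerivAt (f n) (f (n + 1) x) x) (n : ℕ) :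
    EqOn (iteratedDeriv n g) (f n) U := by
  induction n with
  | zero => simpa using hg
  | succ n ih =>
    intro x hx
    rw [iteratedDeriv_succ, (Filter.eventuallyEq_of_mem (hU.mem_nhds hx) ih).deriv_eq]
    exact (hf n x hx).deriv

lemma exp_neg_sub_one_lt_iff {y t : ℝ} :
    Real.exp (-y) - 1 < t ↔ 0 < 1 + t ∧ 0 < y + Real.log (1 + t) := by
  constructor
  · intro ht
    have h1 : 0 < 1 + t := by linarith [Real.exp_pos (-y)]
    have := (Real.lt_log_iff_exp_lt h1).2 (by linarith)
    exact ⟨h1, by linarith⟩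
  · rintro ⟨h1, h2⟩
    have := (Real.lt_log_iff_exp_lt (x := -y) h1).1 (by linarith)
    linarith

/-- The closed-form derivative from the proof of the paper's Theorem 4.3:
`dᵐ/drᵐ (y + ln(1+r))^α`, where `^` denotes the real power `Real.rpow`. -/
theorem iteratedDeriv_rpow_log (α y : ℝ) (m : ℕ) (r : ℝ)
    (hr : 0 < 1 + r) (hyr : 0 < y + Real.log (1 + r)) :
    iteratedDeriv m (fun s => (y + Real.log (1 + s)) ^ α) r =
      (∑ u ∈ Finset.range (m + 1),
          stirlingFirst m u * fallingFactorial α u *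
            (y + Real.log (1 + r)) ^ (α - u)) / (1 + r) ^ m := by
  have hderiv (n : ℕ) (t : ℝ) (ht : t ∈ Ioi (Real.exp (-y) - 1)) :
      HasDerivAt (rpowLogDerivFormula α y n) (rpowLogDerivFormula α y (n + 1) t) t :=
    have ⟨h1, h2⟩ := exp_neg_sub_one_lt_iff.1 ht
    hasDerivAt_rpowLogDerivFormula α y n h1 h2
  have hzero : EqOn (fun s => (y + Real.log (1 + s)) ^ α) (rpowLogDerivFormula α y 0)
      (Ioi (Real.exp (-y) - 1)) := fun t _ => by
    simp [rpowLogDerivFormula, stirlingFirst, fallingFactorial]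
  exact iteratedDeriv_eqOn_of_hasDerivAt isOpen_Ioi hzero hderiv m
    (exp_neg_sub_one_lt_iff.2 ⟨hr, hyr⟩)
end
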